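/- Let F be a closed subbifunctor of Ext^1 on an abelian category 𝒜, P• a bounded-above complex of F-projective objects, and X• any complex. Then the localization functor induces an isomorphism Hom_{K(𝒜)}(P•, X•) ≅ Hom_{D_F(𝒜)}(P•, X•), where D_F(𝒜) is the Verdier quotient of the homotopy category K(𝒜) by the thick subcategory of F-acyclic complexes. -/

import Mathlib

/-!
A chain map `u` from a bounded above complex `P` of `F`-projectives to an `F`-acyclic complex
`Z` is null homotopic: `Z` is spliced from the `F`-exact sequences `Im d → Z^i → Im d`, so a
cycle `P^{i+1} → Z^{i+1}` lifts along `d : Z^i → Z^{i+1}` by `F`-projectivity, and the homotopy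
is built by descending induction from the top degree of `P`. Hence `P` is left orthogonal in
`K(𝒜)` to the `F`-acyclic complexes, and the Verdier localization at a triangulated
subcategory is bijective on morphisms out of objects left orthogonal to it.
-/

open CategoryTheory CategoryTheory.Limits CategoryTheory.Category

universe w v u v' u'

namespace RelDer

variable {𝒜 : Type u} [Category.{v} 𝒜] [Abelian 𝒜]

/-- `g` is an `F`-epimorphism: it fits into an `F`-exact short exact sequence. -/
def FEpi (F : ShortComplex 𝒜 → Prop) {B C : 𝒜} (g : B ⟶ C) : Prop :=
  ∃ (K : 𝒜) (k : K ⟶ B) (w : k ≫ g = 0), F (ShortComplex.mk k g w)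

/-- `f` is an `F`-monomorphism. -/
def FMono (F : ShortComplex 𝒜 → Prop) {A B : 𝒜} (f : A ⟶ B) : Prop :=
  ∃ (C : 𝒜) (g : B ⟶ C) (w : f ≫ g = 0), F (ShortComplex.mk f g w)

/-- `P` is `F`-projective: `Hom(P,-)` sends `F`-exact sequences to exact sequences. -/
def FProjective (F : ShortComplex 𝒜 → Prop) (P : 𝒜) : Prop :=
  ∀ (S : ShortComplex 𝒜), F S → ∀ (p : P ⟶ S.X₃), ∃ q : P ⟶ S.X₂, q ≫ S.g = p

/-- `I` is `F`-injective. -/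
def FInjective (F : ShortComplex 𝒜 → Prop) (I : 𝒜) : Prop :=
  ∀ (S : ShortComplex 𝒜), F S → ∀ (p : S.X₁ ⟶ I), ∃ q : S.X₂ ⟶ I, S.f ≫ q = p

/-- `F` has enough projectives. -/
def HasEnoughFProjectives (F : ShortComplex 𝒜 → Prop) : Prop :=
  ∀ M : 𝒜, ∃ (P : 𝒜) (g : P ⟶ M), FProjective F P ∧ FEpi F g

/-- `F` has enough injectives. -/
def HasEnoughFInjectives (F : ShortComplex 𝒜 → Prop) : Prop :=
  ∀ M : 𝒜, ∃ (I : 𝒜) (f : M ⟶ I), FInjective F I ∧ FMono F f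

lemma image_ι_comp_d (X : CochainComplex 𝒜 ℤ) (i : ℤ) :
    image.ι (X.d (i-1) i) ≫ X.d i (i+1) = 0 := by
  rw [← cancel_epi (factorThruImage (X.d (i-1) i)), image.fac_assoc,
    HomologicalComplex.d_comp_d, comp_zero]

/-- The short complex `Im d^{i-1} → X^i → Im d^i` associated to a cochain complex. -/
noncomputable def imagesShortComplex (X : CochainComplex 𝒜 ℤ) (i : ℤ) : ShortComplex 𝒜 :=
  ShortComplex.mk (image.ι (X.d (i-1) i)) (factorThruImage (X.d i (i+1)))
    (by rw [← cancel_mono (image.ι (X.d i (i+1))), assoc, image.fac, zero_comp,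
      image_ι_comp_d])

/-- A complex is `F`-acyclic if each `0 → Im d^{i-1} → X^i → Im d^i → 0` is `F`-exact. -/
def FAcyclic (F : ShortComplex 𝒜 → Prop) (X : CochainComplex 𝒜 ℤ) : Prop :=
  ∀ i : ℤ, F (imagesShortComplex X i)

/-- A chain map is an `F`-quasi-isomorphism if its mapping cone is `F`-acyclic. -/
def FQuasiIso (F : ShortComplex 𝒜 → Prop) {X Y : CochainComplex 𝒜 ℤ} (f : X ⟶ Y) : Prop :=
  FAcyclic F (CochainComplex.mappingCone f)

def BoundedAbove (X : CochainComplex 𝒜 ℤ) : Prop :=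
  ∃ n : ℤ, ∀ i, n < i → IsZero (X.X i)

def Bounded (X : CochainComplex 𝒜 ℤ) : Prop :=
  ∃ a b : ℤ, ∀ i, (i < a ∨ b < i) → IsZero (X.X i)

/-- An equivalence of (pre)triangulated categories. -/
structure TriangleEquivalence (C : Type u) (D : Type u') [Category.{v} C] [Category.{v'} D]
    [HasShift C ℤ] [HasShift D ℤ] [Preadditive C] [Preadditive D]
    [HasZeroObject C] [HasZeroObject D]
    [∀ n : ℤ, (shiftFunctor C n).Additive] [∀ n : ℤ, (shiftFunctor D n).Additive]
    [Pretriangulated C] [Pretriangulated D] where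
  e : C ≌ D
  commShift : e.functor.CommShift ℤ
  isTriangulated : letI := commShift; e.functor.IsTriangulated

/-- Two maps are stably equal if their difference factors through an object satisfying `P`. -/
def stableHomRel (P : 𝒜 → Prop) : HomRel 𝒜 := fun {X Y} f g =>
  ∃ (Z : 𝒜) (_ : P Z) (a : X ⟶ Z) (b : Z ⟶ Y), f - g = a ≫ b

/-- The stable category of `𝒜` modulo objects satisfying `P`. -/
abbrev StableCategory (P : 𝒜 → Prop) := CategoryTheory.Quotient (stableHomRel P)

/-- The complex `Hom(P^•, Y)` of abelian groups, whose homology computes relative Ext. -/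
noncomputable def homComplex (P : CochainComplex 𝒜 ℤ) (Y : 𝒜) :
    HomologicalComplex AddCommGrpCat (ComplexShape.up ℤ).symm :=
  ((preadditiveYoneda.obj Y).mapHomologicalComplex (ComplexShape.up ℤ).symm).obj P.op

/-- The relative Ext group `Ext^i_F(X,Y)` computed from an `F`-projective resolution `P` of
`X` as the `i`-th cohomology of `Hom(P^•,Y)`. -/
noncomputable def extFGroup (P : CochainComplex 𝒜 ℤ) (Y : 𝒜) (i : ℤ) : AddCommGrpCat :=
  (homComplex P Y).homology (-i)

/-- `P`, together with the augmentation `ε`, is an `F`-projective resolution of `X`. -/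
def IsFProjResolution (F : ShortComplex 𝒜 → Prop) (X : 𝒜) (P : CochainComplex 𝒜 ℤ)
    (ε : P ⟶ (CochainComplex.singleFunctor 𝒜 0).obj X) : Prop :=
  (∀ i : ℤ, 0 < i → IsZero (P.X i)) ∧ (∀ i : ℤ, FProjective F (P.X i)) ∧ FQuasiIso F ε

/-- `X` has `F`-projective dimension at most `m`. -/
def FProjDimLe (F : ShortComplex 𝒜 → Prop) (X : 𝒜) (m : ℕ) : Prop :=
  ∃ (P : CochainComplex 𝒜 ℤ) (ε : P ⟶ (CochainComplex.singleFunctor 𝒜 0).obj X),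
    IsFProjResolution F X P ε ∧ ∀ i : ℤ, i < -(m : ℤ) → IsZero (P.X i)

/-- `I`, together with the augmentation `ε`, is an `F`-injective coresolution of `X`. -/
def IsFInjCoresolution (F : ShortComplex 𝒜 → Prop) (X : 𝒜) (I : CochainComplex 𝒜 ℤ)
    (ε : (CochainComplex.singleFunctor 𝒜 0).obj X ⟶ I) : Prop :=
  (∀ i : ℤ, i < 0 → IsZero (I.X i)) ∧ (∀ i : ℤ, FInjective F (I.X i)) ∧ FQuasiIso F ε

/-- `X` has `F`-injective dimension at most `m`. -/
def FInjDimLe (F : ShortComplex 𝒜 → Prop) (X : 𝒜) (m : ℕ) : Prop :=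
  ∃ (I : CochainComplex 𝒜 ℤ) (ε : (CochainComplex.singleFunctor 𝒜 0).obj X ⟶ I),
    IsFInjCoresolution F X I ε ∧ ∀ i : ℤ, (m : ℤ) < i → IsZero (I.X i)

/-- The `F`-projective dimension of `X`, valued in `ℕ∞`. -/
noncomputable def FProjDim (F : ShortComplex 𝒜 → Prop) (X : 𝒜) : ℕ∞ :=
  sInf {n : ℕ∞ | ∃ m : ℕ, n = m ∧ FProjDimLe F X m}

/-- The `F`-injective dimension of `X`, valued in `ℕ∞`. -/
noncomputable def FInjDim (F : ShortComplex 𝒜 → Prop) (X : 𝒜) : ℕ∞ :=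
  sInf {n : ℕ∞ | ∃ m : ℕ, n = m ∧ FInjDimLe F X m}

/-- The `F`-global dimension. -/
noncomputable def FGlobalDim (F : ShortComplex 𝒜 → Prop) : ℕ∞ :=
  ⨆ X : 𝒜, FProjDim F X

/-- The `F`-finitistic dimension. -/
noncomputable def FFinitisticDim (F : ShortComplex 𝒜 → Prop) : ℕ∞ :=
  ⨆ X : {X : 𝒜 // FProjDim F X ≠ ⊤}, FProjDim F X.1

/-- The class of all short exact sequences: the absolute (non-relative) exact structure. -/
def allExact : ShortComplex 𝒜 → Prop := fun S => S.ShortExact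

/-- `M` belongs to `add G`. -/
def InAdd (G M : 𝒜) : Prop :=
  haveI : HasFiniteBiproducts 𝒜 := Abelian.hasFiniteBiproducts
  ∃ (n : ℕ) (N : 𝒜), Nonempty ((M ⊞ N) ≅ (⨁ fun _ : Fin n => G))

section TriangulatedSubcategory

open Pretriangulated

/-- The former Mathlib structure `CategoryTheory.Triangulated.Subcategory` (removed since),
restated with its old fields. -/
structure Triangulated.Subcategory (C : Type*) [Category C] [HasZeroObject C] [HasShift C ℤ]
    [Preadditive C] [∀ n : ℤ, (shiftFunctor C n).Additive] [Pretriangulated C] where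
  P : C → Prop
  zero' : ∃ (Z : C) (_ : IsZero Z), P Z
  shift (X : C) (n : ℤ) : P X → P (X⟦n⟧)
  ext₂' (T : Triangle C) (_ : T ∈ distTriang C) : P T.obj₁ → P T.obj₃ →
    ObjectProperty.isoClosure P T.obj₂

/-- The former `CategoryTheory.Triangulated.Subcategory.W`. -/
def Triangulated.Subcategory.W {C : Type*} [Category C] [HasZeroObject C] [HasShift C ℤ]
    [Preadditive C] [∀ n : ℤ, (shiftFunctor C n).Additive] [Pretriangulated C]
    (S : Triangulated.Subcategory C) : MorphismProperty C :=
  fun X Y f => ∃ (Z : C) (g : Y ⟶ Z) (h : Z ⟶ X⟦(1 : ℤ)⟧)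
    (_ : Triangle.mk f g h ∈ distTriang C), S.P Z

end TriangulatedSubcategory

/-- `T` generates the objects satisfying `Gen` as a triangulated category
(closed under isomorphisms and retracts/direct summands). -/
def Generates {𝒯 : Type u'} [Category.{v'} 𝒯] [HasZeroObject 𝒯] [HasShift 𝒯 ℤ]
    [Preadditive 𝒯] [∀ n : ℤ, (shiftFunctor 𝒯 n).Additive] [Pretriangulated 𝒯]
    (T : 𝒯) (Gen : 𝒯 → Prop) : Prop :=
  ∀ (S : Triangulated.Subcategory 𝒯),
    (∀ X Y : 𝒯, (X ≅ Y) → S.P X → S.P Y) →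
    (∀ X Y : 𝒯, (∃ (r : X ⟶ Y) (s : Y ⟶ X), s ≫ r = 𝟙 Y) → S.P X → S.P Y) →
    S.P T → ∀ X : 𝒯, Gen X → S.P X

section NullHomotopy

variable {F : ShortComplex 𝒜 → Prop}

lemma exists_lift_image_ι_of_comp_d_eq_zero {Z : CochainComplex 𝒜 ℤ} {j : ℤ}
    (hS : (imagesShortComplex Z j).Exact) {Q : 𝒜} (v : Q ⟶ Z.X j)
    (hv : v ≫ Z.d j (j+1) = 0) :
    ∃ w : Q ⟶ image (Z.d (j-1) j), w ≫ image.ι (Z.d (j-1) j) = v := by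
  have hvg : v ≫ factorThruImage (Z.d j (j+1)) = 0 := by
    rw [← cancel_mono (image.ι _), assoc, image.fac, hv, zero_comp]
  have : Mono (imagesShortComplex Z j).f := by dsimp [imagesShortComplex]; infer_instance
  exact ⟨hS.lift v hvg, hS.lift_f v hvg⟩

lemma FProjective.exists_lift_factorThruImage {Z : CochainComplex 𝒜 ℤ} {i : ℤ}
    (hF : F (imagesShortComplex Z i)) {Q : 𝒜} (hQ : FProjective F Q)
    (w : Q ⟶ image (Z.d i (i+1))) :
    ∃ q : Q ⟶ Z.X i, q ≫ Z.d i (i+1) = w ≫ image.ι (Z.d i (i+1)) := by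
  obtain ⟨q, hq⟩ : ∃ q : Q ⟶ Z.X i, q ≫ factorThruImage (Z.d i (i+1)) = w := hQ _ hF w
  exact ⟨q, by rw [← hq, assoc, image.fac]⟩

lemma FAcyclic.exists_comp_d_eq (hSE : ∀ S, F S → S.ShortExact) {Z : CochainComplex 𝒜 ℤ}
    (hZ : FAcyclic F Z) {Q : 𝒜} (hQ : FProjective F Q) (i : ℤ) (v : Q ⟶ Z.X (i+1))
    (hv : v ≫ Z.d (i+1) (i+1+1) = 0) :
    ∃ q : Q ⟶ Z.X i, q ≫ Z.d i (i+1) = v := by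
  have hw := exists_lift_image_ι_of_comp_d_eq_zero (hSE _ (hZ (i+1))).exact v hv
  rw [show i + 1 - 1 = i by omega] at hw
  obtain ⟨w, hw⟩ := hw
  obtain ⟨q, hq⟩ := hQ.exists_lift_factorThruImage (hZ i) w
  exact ⟨q, hq.trans hw⟩

variable {P Z : CochainComplex 𝒜 ℤ} (u : P ⟶ Z)

lemma sub_d_comp_comp_d_eq_zero {i : ℤ} (s : P.X (i+1+1) ⟶ Z.X (i+1))
    (hs : P.d (i+1) (i+1+1) ≫ s ≫ Z.d (i+1) (i+1+1) = P.d (i+1) (i+1+1) ≫ u.f (i+1+1)) :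
    (u.f (i+1) - P.d (i+1) (i+1+1) ≫ s) ≫ Z.d (i+1) (i+1+1) = 0 := by
  rw [Preadditive.sub_comp, assoc, hs, u.comm, sub_self]

variable (hSE : ∀ S, F S → S.ShortExact) (hZ : FAcyclic F Z)
  (hProj : ∀ i : ℤ, FProjective F (P.X i)) {n : ℤ} (hn : ∀ i, n < i → IsZero (P.X i))

/-- The components `P^{i+1} ⟶ Z^i` of a null homotopy of `u`, built downwards from the degree
`n` above which `P` vanishes. The invariant is what makes the next lifting problem a cycle. -/
noncomputable def nullHomotopyComponent (i : ℤ) :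
    {s : P.X (i+1) ⟶ Z.X i // P.d i (i+1) ≫ s ≫ Z.d i (i+1) = P.d i (i+1) ≫ u.f (i+1)} :=
  if hi : n < i + 1 then
    ⟨0, by simp [(hn _ hi).eq_of_src (u.f (i+1)) 0]⟩
  else
    have hv := sub_d_comp_comp_d_eq_zero u _ (nullHomotopyComponent (i+1)).2
    ⟨(hZ.exists_comp_d_eq hSE (hProj (i+1)) i _ hv).choose, by
      rw [(hZ.exists_comp_d_eq hSE (hProj (i+1)) i _ hv).choose_spec]
      simp⟩
termination_by (n - i).toNat

lemma nullHomotopyComponent_comp_d (i : ℤ) :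
    (nullHomotopyComponent u hSE hZ hProj hn i).1 ≫ Z.d i (i+1) =
      u.f (i+1) - P.d (i+1) (i+1+1) ≫ (nullHomotopyComponent u hSE hZ hProj hn (i+1)).1 := by
  rw [nullHomotopyComponent]
  split_ifs with hi
  · simp [(hn _ hi).eq_of_src (u.f (i+1)) 0, (hn _ hi).eq_of_src (P.d (i+1) (i+1+1)) 0]
  · exact (hZ.exists_comp_d_eq hSE (hProj (i+1)) i _ (sub_d_comp_comp_d_eq_zero u _
      (nullHomotopyComponent u hSE hZ hProj hn (i+1)).2)).choose_spec

noncomputable def nullHomotopy : Homotopy u 0 where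
  hom i j := if h : i = j + 1 then
    eqToHom (congrArg P.X h) ≫ (nullHomotopyComponent u hSE hZ hProj hn j).1 else 0
  zero i j hij := dif_neg fun h => hij h.symm
  comm i := by
    obtain ⟨j, rfl⟩ : ∃ j, i = j + 1 := ⟨i - 1, by omega⟩
    rw [dNext_eq _ (show (ComplexShape.up ℤ).Rel (j+1) (j+1+1) from rfl),
      prevD_eq _ (show (ComplexShape.up ℤ).Rel j (j+1) from rfl), dif_pos rfl, dif_pos rfl]
    simp only [eqToHom_refl, id_comp, nullHomotopyComponent_comp_d,
      HomologicalComplex.zero_f_apply, add_zero]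
    abel

end NullHomotopy

instance Triangulated.Subcategory.isTriangulated_P {C : Type*} [Category C] [HasZeroObject C]
    [HasShift C ℤ] [Preadditive C] [∀ n : ℤ, (shiftFunctor C n).Additive] [Pretriangulated C]
    (S : Triangulated.Subcategory C) : ObjectProperty.IsTriangulated S.P where
  exists_zero := S.zero'.imp fun _ ⟨hZ, h⟩ => ⟨hZ, h⟩
  isStableUnderShiftBy a := ⟨fun X hX => S.shift X a hX⟩
  ext₂' := S.ext₂'

lemma leftOrthogonal_quotient_obj_of_fProjective {F : ShortComplex 𝒜 → Prop}
    (hSE : ∀ S, F S → S.ShortExact)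
    (N : Triangulated.Subcategory (HomotopyCategory 𝒜 (ComplexShape.up ℤ)))
    (hN : ∀ Z : CochainComplex 𝒜 ℤ,
      N.P ((HomotopyCategory.quotient 𝒜 (ComplexShape.up ℤ)).obj Z) ↔ FAcyclic F Z)
    {P : CochainComplex 𝒜 ℤ} (hP : BoundedAbove P) (hProj : ∀ i : ℤ, FProjective F (P.X i)) :
    ObjectProperty.leftOrthogonal N.P
      ((HomotopyCategory.quotient 𝒜 (ComplexShape.up ℤ)).obj P) := by
  intro T g hT
  obtain ⟨n, hn⟩ := hP
  obtain ⟨u, rfl⟩ := (HomotopyCategory.quotient 𝒜 (ComplexShape.up ℤ)).map_surjective g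
  rw [HomotopyCategory.eq_of_homotopy u 0 (nullHomotopy u hSE ((hN T.as).mp hT) hProj hn),
    Functor.map_zero]
  rfl

universe u₁ v₁ u₂ v₂ u₃ v₃

theorem statement7_general {𝒜 : Type u} [Category.{v} 𝒜] [Abelian 𝒜]
    (F : ShortComplex 𝒜 → Prop) (hSE : ∀ S, F S → S.ShortExact)
    (N : Triangulated.Subcategory (HomotopyCategory 𝒜 (ComplexShape.up ℤ)))
    (hN : ∀ Z : CochainComplex 𝒜 ℤ,
      N.P ((HomotopyCategory.quotient 𝒜 (ComplexShape.up ℤ)).obj Z) ↔ FAcyclic F Z)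
    {DF : Type u₁} [Category.{v₁} DF]
    (L : HomotopyCategory 𝒜 (ComplexShape.up ℤ) ⥤ DF) [L.IsLocalization N.W]
    (P X : CochainComplex 𝒜 ℤ) (hP : BoundedAbove P)
    (hProj : ∀ i : ℤ, FProjective F (P.X i)) :
    Function.Bijective
      (fun f : ((HomotopyCategory.quotient 𝒜 (ComplexShape.up ℤ)).obj P ⟶
          (HomotopyCategory.quotient 𝒜 (ComplexShape.up ℤ)).obj X) => L.map f) := by
  have : L.IsLocalization (ObjectProperty.trW N.P) := ‹L.IsLocalization N.W›
  exact ObjectProperty.leftOrthogonal.map_bijective_of_isTriangulated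
    (leftOrthogonal_quotient_obj_of_fProjective hSE N hN hP hProj) L _

/-- For a bounded above complex `P^•` of `F`-projectives, the localization functor induces
a bijection `Hom_{K(𝒜)}(P^•, X^•) ≅ Hom_{D_F(𝒜)}(P^•, X^•)`. -/
theorem statement7 {𝒜 : Type u} [Category.{v} 𝒜] [Abelian 𝒜]
    (F : ShortComplex 𝒜 → Prop) (hSE : ∀ S, F S → S.ShortExact)
    -- `F` is closed: `F`-acyclic complexes are stable under mapping cones
    (hclosed : ∀ (U V : CochainComplex 𝒜 ℤ) (u : U ⟶ V), FAcyclic F U → FAcyclic F V →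
      FAcyclic F (CochainComplex.mappingCone u))
    (N : Triangulated.Subcategory (HomotopyCategory 𝒜 (ComplexShape.up ℤ)))
    (hN : ∀ Z : CochainComplex 𝒜 ℤ,
      N.P ((HomotopyCategory.quotient 𝒜 (ComplexShape.up ℤ)).obj Z) ↔ FAcyclic F Z)
    {DF : Type u₁} [Category.{v₁} DF]
    (L : HomotopyCategory 𝒜 (ComplexShape.up ℤ) ⥤ DF) [L.IsLocalization N.W]
    (P X : CochainComplex 𝒜 ℤ) (hP : BoundedAbove P)
    (hProj : ∀ i : ℤ, FProjective F (P.X i)) :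
    Function.Bijective
      (fun f : ((HomotopyCategory.quotient 𝒜 (ComplexShape.up ℤ)).obj P ⟶
          (HomotopyCategory.quotient 𝒜 (ComplexShape.up ℤ)).obj X) => L.map f) :=
  statement7_general F hSE N hN L P X hP hProj

end RelDer
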